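/- Let (Ω, ℱ, P) be a probability space, 𝒢 ⊆ ℱ a sub-σ-algebra, θ a square-integrable real random variable, and ε a square-integrable real random variable with E[ε]=0 and E[ε²]=v, independent of the σ-algebra generated by 𝒢 and θ. Set y = θ + ε, μ_mix = E[θ], μ_loc = E[θ|𝒢]. Let B be a 𝒢-measurable random weight with 0 ≤ B ≤ 1 − c for some constant c > 0. Then the Bayes risks of the global and local oracle shrinkage estimators satisfy E[((1−B)μ_mix + B·y − θ)²] − E[((1−B)μ_loc + B·y − θ)²] = E[(1−B)²·(μ_mix − μ_loc)²] ≥ c²·Var(E[θ|𝒢]). In particular, if Var(E[θ|𝒢]) > 0, then the local oracle estimator has strictly smaller Bayes risk than the global oracle estimator. -/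

import Mathlib

/-!
Write the error of the estimator centred at `M` as `d + e`, where `d = (1 - B)(M - E[θ|𝒢])` and
`e = (1 - B)(E[θ|𝒢] - θ) + B ε` is the error of the local estimator. The cross term `E[d e]`
vanishes: `(1 - B) d` is `𝒢`-measurable, hence orthogonal to `E[θ|𝒢] - θ`, and `B d` is
independent of the centred noise `ε`. So the risk gap is `E[d²]`, which is at least
`c² Var(E[θ|𝒢])` because `1 - B ≥ c`.
-/

open MeasureTheory ProbabilityTheory
open scoped ENNReal

section

variable {Ω : Type*} {mΩ : MeasurableSpace Ω} {P : Measure Ω}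

lemma integral_add_sq_of_integral_mul_eq_zero {f g : Ω → ℝ} (hf : MemLp f 2 P)
    (hg : MemLp g 2 P) (hfg : ∫ ω, f ω * g ω ∂P = 0) :
    ∫ ω, (f ω + g ω) ^ 2 ∂P = ∫ ω, f ω ^ 2 ∂P + ∫ ω, g ω ^ 2 ∂P := by
  have hsq : Integrable (fun ω => f ω ^ 2 + g ω ^ 2) P := hf.integrable_sq.add hg.integrable_sq
  have hcross : Integrable (fun ω => 2 * (f ω * g ω)) P := (hf.integrable_mul hg).const_mul 2
  calc ∫ ω, (f ω + g ω) ^ 2 ∂P = ∫ ω, (f ω ^ 2 + g ω ^ 2 + 2 * (f ω * g ω)) ∂P := by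
        congr with ω; ring
    _ = ∫ ω, f ω ^ 2 ∂P + ∫ ω, g ω ^ 2 ∂P := by
        rw [integral_add hsq hcross, integral_add hf.integrable_sq hg.integrable_sq,
          integral_const_mul, hfg, mul_zero, add_zero]

lemma integral_mul_condExp_sub_eq_zero [IsFiniteMeasure P] {m : MeasurableSpace Ω}
    (hm : m ≤ mΩ) {Z θ : Ω → ℝ} (hZm : StronglyMeasurable[m] Z) (hZ : MemLp Z 2 P)
    (hθ : MemLp θ 2 P) :
    ∫ ω, Z ω * ((P[θ|m]) ω - θ ω) ∂P = 0 := by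
  have hZθ : Integrable (fun ω => Z ω * θ ω) P := hZ.integrable_mul hθ
  have hpull : ∫ ω, Z ω * (P[θ|m]) ω ∂P = ∫ ω, Z ω * θ ω ∂P :=
    calc ∫ ω, Z ω * (P[θ|m]) ω ∂P = ∫ ω, (P[Z * θ|m]) ω ∂P :=
          integral_congr_ae
            (condExp_mul_of_stronglyMeasurable_left hZm hZθ (hθ.integrable one_le_two)).symm
      _ = ∫ ω, Z ω * θ ω ∂P := integral_condExp hm
  have hZL : Integrable (fun ω => Z ω * (P[θ|m]) ω) P := hZ.integrable_mul (hθ.condExp one_le_two)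
  simp_rw [mul_sub]
  rw [integral_sub hZL hZθ, hpull, sub_self]

lemma integral_mul_eq_zero_of_indep {m : MeasurableSpace Ω} (hm : m ≤ mΩ) {X ε : Ω → ℝ}
    (hindep : Indep m (MeasurableSpace.comap ε Real.measurableSpace) P)
    (hXm : Measurable[m] X) (hε : AEStronglyMeasurable[mΩ] ε P) (hεmean : ∫ ω, ε ω ∂P = 0) :
    ∫ ω, X ω * ε ω ∂P = 0 := by
  have hXε : IndepFun X ε P :=
    (IndepFun_iff_Indep X ε P).2 (indep_of_indep_of_le_left hindep hXm.comap_le)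
  calc ∫ ω, X ω * ε ω ∂P = (∫ ω, X ω ∂P) * ∫ ω, ε ω ∂P :=
        hXε.integral_mul_eq_mul_integral (hXm.mono hm le_rfl).aestronglyMeasurable hε
    _ = 0 := by rw [hεmean, mul_zero]

theorem integral_shrinkage_sq_sub_condExp [IsFiniteMeasure P] {m : MeasurableSpace Ω}
    (hm : m ≤ mΩ) {θ ε B M : Ω → ℝ} (hθ : MemLp θ 2 P) (hε : MemLp ε 2 P)
    (hεmean : ∫ ω, ε ω ∂P = 0)
    (hindep : Indep m (MeasurableSpace.comap ε Real.measurableSpace) P)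
    (hBm : StronglyMeasurable[m] B) (hB : MemLp B ∞ P)
    (hMm : StronglyMeasurable[m] M) (hM : MemLp M 2 P) :
    (∫ ω, ((1 - B ω) * M ω + B ω * (θ ω + ε ω) - θ ω) ^ 2 ∂P)
        - ∫ ω, ((1 - B ω) * (P[θ|m]) ω + B ω * (θ ω + ε ω) - θ ω) ^ 2 ∂P
      = ∫ ω, (1 - B ω) ^ 2 * (M ω - (P[θ|m]) ω) ^ 2 ∂P := by
  set L := P[θ|m]
  have hL : MemLp L 2 P := hθ.condExp one_le_two
  have hLm : StronglyMeasurable[m] L := stronglyMeasurable_condExp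
  have hA : MemLp (fun ω => 1 - B ω) ∞ P := (memLp_const 1).sub hB
  have hAm : StronglyMeasurable[m] (fun ω => 1 - B ω) := stronglyMeasurable_const.sub hBm
  set d := fun ω => (1 - B ω) * (M ω - L ω)
  set e := fun ω => (1 - B ω) * (L ω - θ ω) + B ω * ε ω
  have hd : MemLp d 2 P := (hM.sub hL).mul' hA
  have he : MemLp e 2 P := ((hL.sub hθ).mul' hA).add (hε.mul' hB)
  have hAd : MemLp (fun ω => (1 - B ω) * d ω) 2 P := hd.mul' hA
  have hBd : MemLp (fun ω => B ω * d ω) 2 P := hd.mul' hB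
  have horth : ∫ ω, ((1 - B ω) * d ω) * (L ω - θ ω) ∂P = 0 :=
    integral_mul_condExp_sub_eq_zero hm (hAm.mul (hAm.mul (hMm.sub hLm))) hAd hθ
  have hnoise : ∫ ω, (B ω * d ω) * ε ω ∂P = 0 :=
    integral_mul_eq_zero_of_indep hm hindep
      (hBm.mul (hAm.mul (hMm.sub hLm))).measurable hε.aestronglyMeasurable hεmean
  have hcross : ∫ ω, d ω * e ω ∂P = 0 := by
    have h1 : Integrable (fun ω => ((1 - B ω) * d ω) * (L ω - θ ω)) P :=
      hAd.integrable_mul (hL.sub hθ)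
    have h2 : Integrable (fun ω => (B ω * d ω) * ε ω) P := hBd.integrable_mul hε
    calc ∫ ω, d ω * e ω ∂P
        = ∫ ω, (((1 - B ω) * d ω) * (L ω - θ ω) + (B ω * d ω) * ε ω) ∂P := by
          congr with ω; simp only [d, e]; ring
      _ = 0 := by rw [integral_add h1 h2, horth, hnoise, add_zero]
  calc _ = (∫ ω, (d ω + e ω) ^ 2 ∂P) - ∫ ω, e ω ^ 2 ∂P := by
        congr 1 <;> congr with ω <;> simp only [d, e] <;> ring
    _ = ∫ ω, d ω ^ 2 ∂P := by
        rw [integral_add_sq_of_integral_mul_eq_zero hd he hcross, add_sub_cancel_right]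
    _ = _ := by congr with ω; simp only [d]; ring

lemma mul_integral_sq_le_integral_sq_mul_sq {w f : Ω → ℝ} {c : ℝ} (hc : 0 ≤ c)
    (hcw : ∀ ω, c ≤ w ω) (hw : MemLp w ∞ P) (hf : MemLp f 2 P) :
    c ^ 2 * ∫ ω, f ω ^ 2 ∂P ≤ ∫ ω, w ω ^ 2 * f ω ^ 2 ∂P := by
  have hwf : Integrable (fun ω => w ω ^ 2 * f ω ^ 2) P := by
    simpa only [mul_pow] using (hf.mul' hw).integrable_sq
  rw [← integral_const_mul]
  exact integral_mono (hf.integrable_sq.const_mul _) hwf fun ω =>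
    mul_le_mul_of_nonneg_right (pow_le_pow_left₀ hc (hcw ω) 2) (sq_nonneg _)

end

theorem stmt_5_general
    {Ω : Type*} {mΩ : MeasurableSpace Ω} (P : Measure Ω) [IsProbabilityMeasure P]
    (m : MeasurableSpace Ω) (hm : m ≤ mΩ)
    (θ ε : Ω → ℝ)
    (hθ : MemLp θ 2 P) (hε : MemLp ε 2 P)
    (hεmean : ∫ ω, ε ω ∂P = 0)
    (hindep : Indep (m ⊔ MeasurableSpace.comap θ Real.measurableSpace)
        (MeasurableSpace.comap ε Real.measurableSpace) P)
    (y : Ω → ℝ) (hy : y = fun ω => θ ω + ε ω)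
    (B : Ω → ℝ) (hBmeas : Measurable[m] B)
    (c : ℝ) (hc : 0 < c) (hB : ∀ ω, 0 ≤ B ω ∧ B ω ≤ 1 - c) :
    ((∫ ω, ((1 - B ω) * (∫ ω', θ ω' ∂P) + B ω * y ω - θ ω) ^ 2 ∂P)
        - ∫ ω, ((1 - B ω) * (P[θ|m]) ω + B ω * y ω - θ ω) ^ 2 ∂P
      = ∫ ω, (1 - B ω) ^ 2 * ((∫ ω', θ ω' ∂P) - (P[θ|m]) ω) ^ 2 ∂P)
    ∧ (∫ ω, (1 - B ω) ^ 2 * ((∫ ω', θ ω' ∂P) - (P[θ|m]) ω) ^ 2 ∂P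
        ≥ c ^ 2 * ∫ ω, ((P[θ|m]) ω - ∫ ω', θ ω' ∂P) ^ 2 ∂P)
    ∧ (0 < ∫ ω, ((P[θ|m]) ω - ∫ ω', θ ω' ∂P) ^ 2 ∂P →
        (∫ ω, ((1 - B ω) * (P[θ|m]) ω + B ω * y ω - θ ω) ^ 2 ∂P)
          < ∫ ω, ((1 - B ω) * (∫ ω', θ ω' ∂P) + B ω * y ω - θ ω) ^ 2 ∂P) := by
  subst hy
  have hBbdd : MemLp B ∞ P := memLp_top_of_bound (hBmeas.mono hm le_rfl).aestronglyMeasurable 1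
    (ae_of_all _ fun ω => abs_le.2 ⟨by linarith [(hB ω).1], by linarith [(hB ω).2]⟩)
  have hgap := integral_shrinkage_sq_sub_condExp hm hθ hε hεmean
    (indep_of_indep_of_le_left hindep le_sup_left) hBmeas.stronglyMeasurable hBbdd
    stronglyMeasurable_const (memLp_const (∫ ω, θ ω ∂P))
  have hdev : MemLp (fun ω => (∫ ω', θ ω' ∂P) - (P[θ|m]) ω) 2 P :=
    (memLp_const _).sub (hθ.condExp one_le_two)
  have hlower : c ^ 2 * ∫ ω, ((P[θ|m]) ω - ∫ ω', θ ω' ∂P) ^ 2 ∂P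
      ≤ ∫ ω, (1 - B ω) ^ 2 * ((∫ ω', θ ω' ∂P) - (P[θ|m]) ω) ^ 2 ∂P := by
    rw [integral_congr_ae (ae_of_all _ fun ω => sub_sq_comm ((P[θ|m]) ω) (∫ ω', θ ω' ∂P))]
    exact mul_integral_sq_le_integral_sq_mul_sq hc.le (fun ω => le_sub_comm.1 (hB ω).2)
      ((memLp_const 1).sub hBbdd) hdev
  exact ⟨hgap, hlower, fun hvar => by linarith [mul_pos (pow_pos hc 2) hvar]⟩

/-- Theorem 5.1 (oracle dominance of local EB): with features `𝒢 = m`,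
true effect `θ`, observation `y = θ + ε` (noise independent of `σ(𝒢, θ)`),
global center `μ_mix = E[θ]`, local center `μ_loc = E[θ|𝒢]`, and a
`𝒢`-measurable weight `0 ≤ B ≤ 1 - c`, the global-minus-local risk gap equals
`E[(1-B)²(μ_mix - μ_loc)²] ≥ c²·Var(E[θ|𝒢])`; strict dominance follows when
`Var(E[θ|𝒢]) > 0`. -/
theorem stmt_5
    {Ω : Type*} {mΩ : MeasurableSpace Ω} (P : Measure Ω) [IsProbabilityMeasure P]
    (m : MeasurableSpace Ω) (hm : m ≤ mΩ)
    (θ ε : Ω → ℝ) (v : ℝ)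
    (hθ : MemLp θ 2 P) (hε : MemLp ε 2 P)
    (hεmean : ∫ ω, ε ω ∂P = 0) (hεsq : ∫ ω, (ε ω) ^ 2 ∂P = v)
    (hindep : Indep (m ⊔ MeasurableSpace.comap θ Real.measurableSpace)
        (MeasurableSpace.comap ε Real.measurableSpace) P)
    (y : Ω → ℝ) (hy : y = fun ω => θ ω + ε ω)
    (B : Ω → ℝ) (hBmeas : Measurable[m] B)
    (c : ℝ) (hc : 0 < c) (hB : ∀ ω, 0 ≤ B ω ∧ B ω ≤ 1 - c) :
    ((∫ ω, ((1 - B ω) * (∫ ω', θ ω' ∂P) + B ω * y ω - θ ω) ^ 2 ∂P)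
        - ∫ ω, ((1 - B ω) * (P[θ|m]) ω + B ω * y ω - θ ω) ^ 2 ∂P
      = ∫ ω, (1 - B ω) ^ 2 * ((∫ ω', θ ω' ∂P) - (P[θ|m]) ω) ^ 2 ∂P)
    ∧ (∫ ω, (1 - B ω) ^ 2 * ((∫ ω', θ ω' ∂P) - (P[θ|m]) ω) ^ 2 ∂P
        ≥ c ^ 2 * ∫ ω, ((P[θ|m]) ω - ∫ ω', θ ω' ∂P) ^ 2 ∂P)
    ∧ (0 < ∫ ω, ((P[θ|m]) ω - ∫ ω', θ ω' ∂P) ^ 2 ∂P →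
        (∫ ω, ((1 - B ω) * (P[θ|m]) ω + B ω * y ω - θ ω) ^ 2 ∂P)
          < ∫ ω, ((1 - B ω) * (∫ ω', θ ω' ∂P) + B ω * y ω - θ ω) ^ 2 ∂P) :=
  stmt_5_general P m hm θ ε hθ hε hεmean hindep y hy B hBmeas c hc hB
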